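/- arXiv:1510.01042 — 2 statements merged into one kernel-verified Lean document; each statement's English description precedes it below -/
import Mathlib

section
/- Fix T > 0 and a filtered probability space (Ω, F, (F_t)_{t∈[0,T]}, P). Let τ ≤ T be a stopping time and let R : [0,T] × Ω → [0,∞) be a progressively measurable process such that ∫₀^τ R(s) ds < κ almost surely, for a fixed constant κ > 0. Then for every δ > 0 there exist a natural number N and stopping times 0 = τ₀ ≤ τ₁ ≤ … ≤ τ_N ≤ τ_{N+1} = τ such that for each k = 1, …, N+1, ∫_{τ_{k−1}}^{τ_k} R(s) ds < δ almost surely. -/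
/-!
Measure time by the clock `F ω t = ∫_{(0, t]} R s ω ds ∈ [0, ∞]` and cut `[0, τ]` at the first
times `F` reaches the levels `k δ / 2`, `k ≤ N`, where `κ ≤ (N + 1) δ / 2`. The clock is adapted,
left-continuous, and right-continuous where finite, so these passage times are stopping times,
and consecutive ones enclose mass at most `δ / 2`; so does the last piece, because `F τ < κ`.
Pieces of infinite mass are harmless: their Bochner integral is `0`.
-/

open MeasureTheory Set Filter Topology
open scoped ENNReal

section FirstPassage

variable {ν : Measure ℝ} {ℓ ℓ' c x : ℝ≥0∞} {a b m s t y : ℝ}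

lemma measure_Ioc_zero_of_nonpos (ht : t ≤ 0) : ν (Ioc 0 t) = 0 := by
  rw [Ioc_eq_empty (not_lt.2 ht), measure_empty]

lemma measure_Ioc_zero_add_measure_Ioc (hs : 0 ≤ s) (hst : s ≤ t) :
    ν (Ioc 0 s) + ν (Ioc s t) = ν (Ioc 0 t) := by
  rw [← measure_union (Ioc_disjoint_Ioc_of_le le_rfl) measurableSet_Ioc,
    Ioc_union_Ioc_eq_Ioc hs hst]

lemma measure_Ioc_zero_le_of_forall_rat_lt [NullSingletonClass ν]
    (h : ∀ q : ℚ, (q : ℝ) < t → ν (Ioc 0 q) ≤ x) : ν (Ioc 0 t) ≤ x := by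
  have hcover : Ioo 0 t ⊆ ⋃ q : {q : ℚ // (q : ℝ) < t}, Ioc 0 (q : ℝ) := by
    rintro s ⟨hs0, hst⟩
    obtain ⟨q, hsq, hqt⟩ := exists_rat_btwn hst
    exact mem_iUnion.2 ⟨⟨q, hqt⟩, hs0, hsq.le⟩
  calc ν (Ioc 0 t) = ν (Ioo 0 t) := measure_congr (Ioo_ae_eq_Ioc' (measure_singleton t)).symm
    _ ≤ ν (⋃ q : {q : ℚ // (q : ℝ) < t}, Ioc 0 (q : ℝ)) := measure_mono hcover
    _ = ⨆ q : {q : ℚ // (q : ℝ) < t}, ν (Ioc 0 (q : ℝ)) :=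
      Monotone.measure_iUnion fun q q' hqq' => Ioc_subset_Ioc_right (by exact_mod_cast hqq')
    _ ≤ x := iSup_le fun q => h q q.2

lemma le_measure_Ioc_zero_of_forall_Ioc (hmt : m < t) (ht : ν (Ioc 0 t) ≠ ∞)
    (h : ∀ s ∈ Ioc m t, x ≤ ν (Ioc 0 s)) : x ≤ ν (Ioc 0 m) := by
  have hinter : ⋂ r > m, Ioc (0 : ℝ) r = Ioc 0 m := by
    ext s
    simp only [mem_iInter, mem_Ioc]
    exact ⟨fun hs => ⟨(hs t hmt).1, le_of_forall_gt_imp_ge_of_dense fun r hr => (hs r hr).2⟩,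
      fun hs r hr => ⟨hs.1, hs.2.trans hr.le⟩⟩
  have hlim := tendsto_measure_biInter_gt (μ := ν) (s := fun r => Ioc (0 : ℝ) r)
    (fun _ _ => measurableSet_Ioc.nullMeasurableSet)
    (fun _ _ _ hij => Ioc_subset_Ioc_right hij) ⟨t, hmt, ht⟩
  rw [hinter] at hlim
  exact ge_of_tendsto hlim (eventually_of_mem (Ioc_mem_nhdsGT hmt) h)

/-- A level counts as reached only while the mass is still finite. Otherwise the first passage
could sit at the left end of a jump of the mass to `∞`, and deciding whether it is `≤ a` would
require looking past time `a`. -/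
def passageSet (ν : Measure ℝ) (ℓ : ℝ≥0∞) (b : ℝ) : Set ℝ :=
  {t ∈ Icc 0 b | ℓ ≤ ν (Ioc 0 t) ∧ ν (Ioc 0 t) ≠ ∞ ∨ t = b}

noncomputable def firstPassage (ν : Measure ℝ) (ℓ : ℝ≥0∞) (b : ℝ) : ℝ :=
  sInf (passageSet ν ℓ b)

lemma passageSet_nonempty (hb : 0 ≤ b) : (passageSet ν ℓ b).Nonempty :=
  ⟨b, ⟨hb, le_rfl⟩, Or.inr rfl⟩

lemma bddBelow_passageSet : BddBelow (passageSet ν ℓ b) :=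
  ⟨0, fun _ ht => ht.1.1⟩

lemma firstPassage_le_of_mem (ht : t ∈ passageSet ν ℓ b) : firstPassage ν ℓ b ≤ t :=
  csInf_le bddBelow_passageSet ht

lemma firstPassage_mem_Icc (hb : 0 ≤ b) : firstPassage ν ℓ b ∈ Icc 0 b :=
  ⟨le_csInf (passageSet_nonempty hb) fun _ ht => ht.1.1,
    firstPassage_le_of_mem ⟨⟨hb, le_rfl⟩, Or.inr rfl⟩⟩

/-- The infimum is attained: mass is continuous from the right wherever it is finite. -/
lemma firstPassage_mem (hb : 0 ≤ b) : firstPassage ν ℓ b ∈ passageSet ν ℓ b := by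
  refine ⟨firstPassage_mem_Icc hb, ?_⟩
  rcases (firstPassage_mem_Icc hb).2.eq_or_lt with hmb | hmb
  · exact Or.inr hmb
  left
  obtain ⟨r, ⟨hr0, hr⟩, hrb⟩ := exists_lt_of_csInf_lt (passageSet_nonempty hb) hmb
  replace hr := hr.resolve_right hrb.ne
  have hmr : firstPassage ν ℓ b ≤ r := firstPassage_le_of_mem ⟨hr0, Or.inl hr⟩
  refine ⟨?_, ne_top_of_le_ne_top hr.2 (measure_mono (Ioc_subset_Ioc_right hmr))⟩
  rcases hmr.eq_or_lt with hmr | hmr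
  · exact hmr ▸ hr.1
  refine le_measure_Ioc_zero_of_forall_Ioc hmr hr.2 fun s hs => ?_
  obtain ⟨r', ⟨-, hr'⟩, hr's⟩ := exists_lt_of_csInf_lt (passageSet_nonempty hb) hs.1
  exact (hr'.resolve_right (hr's.trans_le (hs.2.trans hrb.le)).ne).1.trans
    (measure_mono (Ioc_subset_Ioc_right hr's.le))

lemma measure_Ioc_zero_firstPassage_le [NullSingletonClass ν] (hb : 0 ≤ b)
    (hfin : ν (Ioc 0 (firstPassage ν ℓ b)) ≠ ∞) : ν (Ioc 0 (firstPassage ν ℓ b)) ≤ ℓ := by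
  refine measure_Ioc_zero_le_of_forall_rat_lt fun q hq => ?_
  rcases lt_or_ge (q : ℝ) 0 with hq0 | hq0
  · rw [measure_Ioc_zero_of_nonpos hq0.le]
    exact zero_le
  by_contra hℓq
  have hqfin : ν (Ioc 0 q) ≠ ∞ :=
    ne_top_of_le_ne_top hfin (measure_mono (Ioc_subset_Ioc_right hq.le))
  have hqb : (q : ℝ) ≤ b := hq.le.trans (firstPassage_mem_Icc hb).2
  exact hq.not_ge (firstPassage_le_of_mem ⟨⟨hq0, hqb⟩, Or.inl ⟨(not_le.1 hℓq).le, hqfin⟩⟩)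

lemma measure_Ioc_zero_firstPassage [NullSingletonClass ν] (hb : 0 ≤ b)
    (h : firstPassage ν ℓ b < b) : ν (Ioc 0 (firstPassage ν ℓ b)) = ℓ := by
  obtain ⟨hℓ, hfin⟩ := (firstPassage_mem hb).2.resolve_right h.ne
  exact le_antisymm (measure_Ioc_zero_firstPassage_le hb hfin) hℓ

lemma firstPassage_mono (hb : 0 ≤ b) (hℓ : ℓ ≤ ℓ') :
    firstPassage ν ℓ b ≤ firstPassage ν ℓ' b :=
  csInf_le_csInf bddBelow_passageSet (passageSet_nonempty hb) fun _ ht =>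
    ⟨ht.1, ht.2.imp_left fun h => ⟨hℓ.trans h.1, h.2⟩⟩

lemma firstPassage_zero (hb : 0 ≤ b) : firstPassage ν 0 b = 0 :=
  le_antisymm (firstPassage_le_of_mem ⟨⟨le_rfl, hb⟩, Or.inl ⟨zero_le,
    by rw [measure_Ioc_zero_of_nonpos le_rfl]; exact ENNReal.zero_ne_top⟩⟩)
    (firstPassage_mem_Icc hb).1

lemma firstPassage_le_iff [NullSingletonClass ν] (hb : 0 ≤ b) (hℓ : ℓ ≠ ∞) :
    firstPassage ν ℓ b ≤ a ↔ b ≤ a ∨ ∃ t ∈ Icc 0 a, ν (Ioc 0 t) = ℓ := by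
  constructor
  · intro h
    refine (le_or_gt b a).imp id fun hab => ?_
    exact ⟨_, ⟨(firstPassage_mem_Icc hb).1, h⟩, measure_Ioc_zero_firstPassage hb (h.trans_lt hab)⟩
  · rintro (hba | ⟨t, ht, htℓ⟩)
    · exact (firstPassage_mem_Icc hb).2.trans hba
    rcases le_total t b with htb | hbt
    · exact (firstPassage_le_of_mem ⟨⟨ht.1, htb⟩, Or.inl ⟨htℓ.ge, htℓ ▸ hℓ⟩⟩).trans ht.2
    · exact (firstPassage_mem_Icc hb).2.trans (hbt.trans ht.2)

/-- By left continuity, the supremum is `ν (0, s]` for the last `s ≤ a` with `ν (0, s] ≤ ℓ`. -/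
lemma exists_measure_Ioc_eq_iff [NullSingletonClass ν] (ha : 0 ≤ a) :
    (∃ t ∈ Icc 0 a, ν (Ioc 0 t) = ℓ) ↔
      ℓ ≤ ⨆ q : {q : ℚ // (q : ℝ) ≤ a}, if ν (Ioc 0 q) ≤ ℓ then ν (Ioc 0 q) else 0 := by
  constructor
  · rintro ⟨t, ht, rfl⟩
    refine measure_Ioc_zero_le_of_forall_rat_lt fun q hq => ?_
    have hqt : ν (Ioc 0 q) ≤ ν (Ioc 0 t) := measure_mono (Ioc_subset_Ioc_right hq.le)
    exact le_iSup_of_le (⟨q, hq.le.trans ht.2⟩ : {q : ℚ // (q : ℝ) ≤ a}) (by rw [if_pos hqt])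
  · intro h
    set S := {t ∈ Icc 0 a | ν (Ioc 0 t) ≤ ℓ}
    have hS0 : 0 ∈ S := ⟨⟨le_rfl, ha⟩, by rw [measure_Ioc_zero_of_nonpos le_rfl]; exact zero_le⟩
    have hSbdd : BddAbove S := ⟨a, fun t ht => ht.1.2⟩
    refine ⟨sSup S, ⟨le_csSup hSbdd hS0, csSup_le ⟨0, hS0⟩ fun t ht => ht.1.2⟩,
      le_antisymm ?_ (h.trans (iSup_le fun q => ?_))⟩
    · refine measure_Ioc_zero_le_of_forall_rat_lt fun q hq => ?_
      obtain ⟨t, ht, hqt⟩ := exists_lt_of_lt_csSup ⟨0, hS0⟩ hq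
      exact (measure_mono (Ioc_subset_Ioc_right hqt.le)).trans ht.2
    split_ifs with hq
    · rcases lt_or_ge (q : ℝ) 0 with hq0 | hq0
      · rw [measure_Ioc_zero_of_nonpos hq0.le]
        exact zero_le
      · exact measure_mono (Ioc_subset_Ioc_right (le_csSup hSbdd ⟨⟨hq0, q.2⟩, hq⟩))
    · exact zero_le

lemma measure_Ioc_firstPassage_le [NullSingletonClass ν] (hb : 0 ≤ b)
    (hy : firstPassage ν ℓ b ≤ y) (hyb : y ≤ b)
    (hyℓ : ν (Ioc 0 y) ≠ ∞ → ν (Ioc 0 y) ≤ ℓ + c)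
    (hfin : ν (Ioc (firstPassage ν ℓ b) y) ≠ ∞) : ν (Ioc (firstPassage ν ℓ b) y) ≤ c := by
  rcases (firstPassage_mem_Icc hb).2.eq_or_lt with hmb | hmb
  · rw [show y = firstPassage ν ℓ b by linarith, Ioc_self, measure_empty]
    exact zero_le
  have hm := measure_Ioc_zero_firstPassage hb hmb
  have hℓ : ℓ ≠ ∞ := hm ▸ ((firstPassage_mem hb).2.resolve_right hmb.ne).2
  have hadd := measure_Ioc_zero_add_measure_Ioc (ν := ν) (firstPassage_mem_Icc hb).1 hy
  rw [hm] at hadd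
  have hyfin : ν (Ioc 0 y) ≠ ∞ := hadd ▸ ENNReal.add_ne_top.2 ⟨hℓ, hfin⟩
  exact (ENNReal.add_le_add_iff_left hℓ).1 (hadd ▸ hyℓ hyfin)

end FirstPassage

section Partition

variable {ν : Measure ℝ} {c : ℝ≥0∞} {N k : ℕ} {b : ℝ}

noncomputable def passagePartition (ν : Measure ℝ) (c : ℝ≥0∞) (N : ℕ) (b : ℝ) (k : ℕ) : ℝ :=
  if k ≤ N then firstPassage ν (k * c) b else b

lemma passagePartition_zero (hb : 0 ≤ b) : passagePartition ν c N b 0 = 0 := by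
  simp [passagePartition, firstPassage_zero hb]

lemma passagePartition_add_one_self : passagePartition ν c N b (N + 1) = b := by
  simp [passagePartition]

lemma passagePartition_le (hb : 0 ≤ b) : passagePartition ν c N b k ≤ b := by
  unfold passagePartition
  split_ifs
  exacts [(firstPassage_mem_Icc hb).2, le_rfl]

lemma passagePartition_le_succ (hb : 0 ≤ b) (hk : k ≤ N) :
    passagePartition ν c N b k ≤ passagePartition ν c N b (k + 1) := by
  rw [passagePartition, if_pos hk, passagePartition]
  split_ifs
  · exact firstPassage_mono hb (by gcongr; exact_mod_cast k.le_succ)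
  · exact (firstPassage_mem_Icc hb).2

lemma measure_Ioc_passagePartition_le [NullSingletonClass ν] (hb : 0 ≤ b)
    (hbN : ν (Ioc 0 b) ≠ ∞ → ν (Ioc 0 b) ≤ (N + 1) * c) (hk : k ≤ N)
    (hfin : ν (Ioc (passagePartition ν c N b k) (passagePartition ν c N b (k + 1))) ≠ ∞) :
    ν (Ioc (passagePartition ν c N b k) (passagePartition ν c N b (k + 1))) ≤ c := by
  have hmono := passagePartition_le_succ (ν := ν) (c := c) hb hk
  rw [passagePartition, if_pos hk] at hfin hmono ⊢
  refine measure_Ioc_firstPassage_le hb hmono (passagePartition_le hb) ?_ hfin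
  have hc : ((k + 1 : ℕ) : ℝ≥0∞) * c = k * c + c := by push_cast; ring
  unfold passagePartition
  split_ifs with hk1
  · exact hc ▸ measure_Ioc_zero_firstPassage_le hb
  · obtain rfl : k = N := by omega
    push_cast at hc
    exact hc ▸ hbN

lemma toReal_measure_Ioc_passagePartition_le [NullSingletonClass ν] {c : ℝ} (hb : 0 ≤ b)
    (hc : 0 ≤ c) (hbN : (ν (Ioc 0 b)).toReal ≤ (N + 1) * c) (hk : k ≤ N) :
    (ν (Ioc (passagePartition ν (.ofReal c) N b k)
      (passagePartition ν (.ofReal c) N b (k + 1)))).toReal ≤ c := by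
  by_cases hfin : ν (Ioc (passagePartition ν (.ofReal c) N b k)
      (passagePartition ν (.ofReal c) N b (k + 1))) = ∞
  · rw [hfin, ENNReal.toReal_top]
    exact hc
  refine ENNReal.toReal_le_of_le_ofReal hc
    (measure_Ioc_passagePartition_le hb (fun hbfin => ?_) hk hfin)
  calc ν (Ioc 0 b) = .ofReal (ν (Ioc 0 b)).toReal := (ENNReal.ofReal_toReal hbfin).symm
    _ ≤ .ofReal ((N + 1) * c) := ENNReal.ofReal_le_ofReal hbN
    _ = (N + 1) * .ofReal c := by
      rw [ENNReal.ofReal_mul (by positivity), ← Nat.cast_add_one, ENNReal.ofReal_natCast,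
        Nat.cast_add_one]

end Partition

section Stopping

variable {Ω : Type*} {mΩ : MeasurableSpace Ω} {ℱ : Filtration ℝ mΩ} {ν : Ω → Measure ℝ}
  [∀ ω, NullSingletonClass (ν ω)] {τ : Ω → ℝ}

lemma isStoppingTime_firstPassage (hν : ∀ t, Measurable[ℱ t] fun ω => ν ω (Ioc 0 t))
    (hτ : IsStoppingTime ℱ fun ω => (τ ω : WithTop ℝ)) (hτ0 : ∀ ω, 0 ≤ τ ω) {ℓ : ℝ≥0∞}
    (hℓ : ℓ ≠ ∞) : IsStoppingTime ℱ fun ω => (firstPassage (ν ω) ℓ (τ ω) : WithTop ℝ) := by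
  intro a
  simp only [WithTop.coe_le_coe]
  rcases lt_or_ge a 0 with ha | ha
  · convert @MeasurableSet.empty _ (ℱ a)
    exact eq_empty_of_forall_notMem fun ω hω =>
      (ha.trans_le (firstPassage_mem_Icc (hτ0 ω)).1).not_ge hω
  have hset : {ω | firstPassage (ν ω) ℓ (τ ω) ≤ a} = {ω | τ ω ≤ a} ∪
      {ω | ℓ ≤ ⨆ q : {q : ℚ // (q : ℝ) ≤ a},
        if ν ω (Ioc 0 q) ≤ ℓ then ν ω (Ioc 0 q) else 0} := by
    ext ω
    simp only [mem_ofPred_eq, mem_union, firstPassage_le_iff (hτ0 ω) hℓ,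
      exists_measure_Ioc_eq_iff ha]
  have hνa (q : {q : ℚ // (q : ℝ) ≤ a}) : Measurable[ℱ a] fun ω => ν ω (Ioc 0 q) :=
    (hν q).mono (ℱ.mono q.2) le_rfl
  have hτa : MeasurableSet[ℱ a] {ω | τ ω ≤ a} := by simpa using hτ a
  rw [hset]
  refine hτa.union (measurableSet_le measurable_const ?_)
  exact Measurable.iSup fun q => (hνa q).ite (measurableSet_le (hνa q) measurable_const)
    measurable_const

lemma isStoppingTime_passagePartition (hν : ∀ t, Measurable[ℱ t] fun ω => ν ω (Ioc 0 t))
    (hτ : IsStoppingTime ℱ fun ω => (τ ω : WithTop ℝ)) (hτ0 : ∀ ω, 0 ≤ τ ω) {c : ℝ≥0∞}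
    (hc : c ≠ ∞) (N k : ℕ) :
    IsStoppingTime ℱ fun ω => (passagePartition (ν ω) c N (τ ω) k : WithTop ℝ) := by
  by_cases hk : k ≤ N
  · simp only [passagePartition, if_pos hk]
    exact isStoppingTime_firstPassage hν hτ hτ0 (ENNReal.mul_ne_top (ENNReal.natCast_ne_top k) hc)
  · simpa only [passagePartition, if_neg hk] using hτ

end Stopping

namespace MeasureTheory.IsStronglyProgressive

variable {Ω : Type*} {mΩ : MeasurableSpace Ω} {ℱ : Filtration ℝ mΩ} {R : ℝ → Ω → ℝ}

lemma stronglyMeasurable_min (hR : IsStronglyProgressive ℱ R) (t : ℝ) :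
    StronglyMeasurable[(ℱ t).prod inferInstance] fun p : Ω × ℝ => R (min p.2 t) p.1 :=
  (hR t).comp_measurable <| Measurable.prodMk
    (Measurable.subtype_mk (h := fun p => min_le_right p.2 t)
      (measurable_snd.min measurable_const)) measurable_fst

lemma measurable_setLIntegral (hR : IsStronglyProgressive ℱ R)
    (μ : Measure ℝ) [SFinite μ] {s : Set ℝ} {t : ℝ} (hs : MeasurableSet s) (hst : s ⊆ Iic t) :
    Measurable[ℱ t] fun ω => ∫⁻ r in s, ENNReal.ofReal (R r ω) ∂μ := by
  convert @Measurable.lintegral_prod_right' Ω ℝ (ℱ t) _ (μ.restrict s) _ _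
    (hR.stronglyMeasurable_min t).measurable.ennreal_ofReal using 2 with ω
  exact setLIntegral_congr_fun hs fun r hr => by rw [min_eq_left (hst hr)]

lemma integral_Ioc_eq_toReal (hR : IsStronglyProgressive ℱ R) {ω : Ω} (hRω : ∀ r, 0 ≤ R r ω)
    (s t : ℝ) :
    ∫ r in Ioc s t, R r ω =
      (volume.withDensity (fun r => ENNReal.ofReal (R r ω)) (Ioc s t)).toReal := by
  have hpath : StronglyMeasurable fun r => R (min r t) ω :=
    (hR.stronglyMeasurable_min t).comp_measurable measurable_prodMk_left
  rw [withDensity_apply _ measurableSet_Ioc]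
  refine integral_eq_lintegral_of_nonneg_ae (ae_of_all _ hRω) ?_
  refine hpath.aestronglyMeasurable.congr (ae_restrict_of_forall_mem measurableSet_Ioc ?_)
  exact fun r hr => by simp only [min_eq_left hr.2]

end MeasureTheory.IsStronglyProgressive

theorem exists_stopping_time_partition_general
    {Ω : Type*} [mΩ : MeasurableSpace Ω] (μ : Measure Ω)
    (ℱ : Filtration ℝ mΩ) (κ : ℝ)
    (R : ℝ → Ω → ℝ) (hRnonneg : ∀ t ω, 0 ≤ R t ω) (hRprog : ProgMeasurable ℱ R)
    (τ : Ω → ℝ) (hτ : IsStoppingTime ℱ (fun ω => (τ ω : WithTop ℝ))) (hτ0 : ∀ ω, 0 ≤ τ ω)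
    (hR : ∀ᵐ ω ∂μ, ∫ s in Set.Ioc 0 (τ ω), R s ω < κ) :
    ∀ δ > (0 : ℝ), ∃ (N : ℕ) (σ : ℕ → Ω → ℝ),
      (∀ k, IsStoppingTime ℱ (fun ω => (σ k ω : WithTop ℝ))) ∧
      (∀ ω, σ 0 ω = 0) ∧
      (∀ ω, σ (N + 1) ω = τ ω) ∧
      (∀ k ≤ N, ∀ ω, σ k ω ≤ σ (k + 1) ω) ∧
      (∀ k, 1 ≤ k → k ≤ N + 1 →
        ∀ᵐ ω ∂μ, ∫ s in Set.Ioc (σ (k - 1) ω) (σ k ω), R s ω < δ) := by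
  intro δ hδ
  set ν : Ω → Measure ℝ := fun ω => volume.withDensity fun r => ENNReal.ofReal (R r ω)
  have hν (t : ℝ) : Measurable[ℱ t] fun ω => ν ω (Ioc 0 t) := by
    simp only [ν, withDensity_apply _ measurableSet_Ioc]
    exact hRprog.measurable_setLIntegral volume measurableSet_Ioc Ioc_subset_Iic_self
  obtain ⟨N, hN⟩ := exists_nat_ge (κ / (δ / 2))
  have hκN : κ ≤ (N + 1) * (δ / 2) := by
    have := (div_le_iff₀ (half_pos hδ)).1 hN
    linarith
  refine ⟨N, fun k ω => passagePartition (ν ω) (.ofReal (δ / 2)) N (τ ω) k,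
    isStoppingTime_passagePartition hν hτ hτ0 ENNReal.ofReal_ne_top N,
    fun ω => passagePartition_zero (hτ0 ω), fun ω => passagePartition_add_one_self,
    fun k hk ω => passagePartition_le_succ (hτ0 ω) hk, fun k hk1 hkN => ?_⟩
  obtain ⟨k, rfl⟩ : ∃ j, k = j + 1 := ⟨k - 1, by omega⟩
  filter_upwards [hR] with ω hω
  rw [hRprog.integral_Ioc_eq_toReal (hRnonneg · ω)] at hω
  rw [Nat.add_sub_cancel, hRprog.integral_Ioc_eq_toReal (hRnonneg · ω)]
  exact (toReal_measure_Ioc_passagePartition_le (hτ0 ω) (half_pos hδ).le (hω.le.trans hκN)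
    (by omega)).trans_lt (half_lt_self hδ)

/-- Given a stopping time `τ ≤ T` and a nonnegative progressively measurable process `R`
with `∫₀^τ R < κ` a.s., for every `δ > 0` there are finitely many stopping times
`0 = τ₀ ≤ τ₁ ≤ … ≤ τ_N ≤ τ_{N+1} = τ` with `∫_{τ_{k-1}}^{τ_k} R < δ` a.s. for each
`k = 1, …, N+1`. -/
theorem exists_stopping_time_partition
    {Ω : Type*} [mΩ : MeasurableSpace Ω] (μ : Measure Ω) [IsProbabilityMeasure μ]
    (ℱ : Filtration ℝ mΩ) (T κ : ℝ) (hT : 0 < T) (hκ : 0 < κ)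
    (R : ℝ → Ω → ℝ) (hRnonneg : ∀ t ω, 0 ≤ R t ω) (hRprog : ProgMeasurable ℱ R)
    (τ : Ω → ℝ) (hτ : IsStoppingTime ℱ (fun ω => (τ ω : WithTop ℝ))) (hτ0 : ∀ ω, 0 ≤ τ ω) (hτT : ∀ ω, τ ω ≤ T)
    (hR : ∀ᵐ ω ∂μ, ∫ s in Set.Ioc 0 (τ ω), R s ω < κ) :
    ∀ δ > (0 : ℝ), ∃ (N : ℕ) (σ : ℕ → Ω → ℝ),
      (∀ k, IsStoppingTime ℱ (fun ω => (σ k ω : WithTop ℝ))) ∧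
      (∀ ω, σ 0 ω = 0) ∧
      (∀ ω, σ (N + 1) ω = τ ω) ∧
      (∀ k ≤ N, ∀ ω, σ k ω ≤ σ (k + 1) ω) ∧
      (∀ k, 1 ≤ k → k ≤ N + 1 →
        ∀ᵐ ω ∂μ, ∫ s in Set.Ioc (σ (k - 1) ω) (σ k ω), R s ω < δ) :=
  exists_stopping_time_partition_general (mΩ := mΩ) μ ℱ κ R hRnonneg hRprog τ hτ hτ0 hR
end

section
/- Suppose X is a separable Banach space, D ⊆ X is a dense subset, X* is the continuous dual of X with dual pairing ⟨·,·⟩, and (E, 𝓔, μ) is a finite measure space. Let p ∈ (1, ∞) and let q be the conjugate exponent, 1/p + 1/q = 1. Assume u and u_n (n ∈ ℕ) belong to L^p(E; X*), that {u_n} is uniformly bounded in L^p(E; X*), and that for every y ∈ D, ⟨u_n(e), y⟩ → ⟨u(e), y⟩ for μ-almost every e ∈ E. Then u_n converges to u in the weak-* sense in L^p(E; X*): for every v ∈ L^q(E; X), ∫_E ⟨u_n(e), v(e)⟩ dμ(e) → ∫_E ⟨u(e), v(e)⟩ dμ(e) as n → ∞. -/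
/-!
Pairing against `uₙ` defines functionals `Λₙ v = ∫ ⟨uₙ, v⟩ dμ` on `L^q(E; X)` that are uniformly
bounded by Hölder's inequality, so the set of `v` with `Λₙ v → Λ v` is a closed subspace. For
`v = 1_s y` with `y ∈ D`, the scalar functions `⟨uₙ, y⟩ 1_s` converge a.e. and are bounded in `Lᵖ`
with `p > 1`, hence uniformly integrable, and Vitali's theorem gives convergence. Closedness and
density of `D` extend this to all `1_s y`, whose span is dense in `L^q`.
-/

open MeasureTheory Filter Topology
open scoped ENNReal

section Vitali

variable {α β : Type*} [MeasurableSpace α] {μ : Measure α} [NormedAddCommGroup β]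

/-- On a set `s`, Hölder gives `‖f i‖_{L¹(s)} ≤ C μ(s)^(1 - 1/p)`, and `1 - 1/p > 0`. -/
theorem unifIntegrable_one_of_eLpNorm_le {ι : Type*} {p : ℝ≥0∞} (hp : 1 < p) {f : ι → α → β}
    (hf : ∀ i, AEStronglyMeasurable (f i) μ) {C : ℝ≥0∞} (hC : C ≠ ∞)
    (hfC : ∀ i, eLpNorm (f i) p μ ≤ C) : UnifIntegrable f 1 μ := by
  set r : ℝ := 1 - 1 / p.toReal
  have hr : 0 < r := by
    rcases eq_or_ne p ∞ with rfl | hp_top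
    · simp [r]
    · have : 1 < p.toReal := by
        simpa using ENNReal.toReal_strict_mono hp_top hp
      simp only [r, sub_pos]
      exact (div_lt_one (by linarith)).2 this
  have hcont : Continuous fun δ : ℝ => C * ENNReal.ofReal δ ^ r :=
    (ENNReal.continuous_const_mul hC).comp
      ((ENNReal.continuous_rpow_const).comp ENNReal.continuous_ofReal)
  intro ε hε
  have hlim : ∀ᶠ δ in 𝓝 (0 : ℝ), C * ENNReal.ofReal δ ^ r < ENNReal.ofReal ε :=
    hcont.continuousAt.eventually_lt continuousAt_const
      (by simpa [ENNReal.zero_rpow_of_pos hr] using hε)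
  obtain ⟨δ, hδε, hδ⟩ :=
    ((hlim.filter_mono nhdsWithin_le_nhds).and (self_mem_nhdsWithin (s := Set.Ioi 0))).exists
  refine ⟨δ, hδ, fun i s hs hμs => ?_⟩
  calc eLpNorm (s.indicator (f i)) 1 μ = eLpNorm (f i) 1 (μ.restrict s) :=
        eLpNorm_indicator_eq_eLpNorm_restrict hs
    _ ≤ eLpNorm (f i) p (μ.restrict s) * μ.restrict s Set.univ ^ r := by
        simpa [r] using eLpNorm_le_eLpNorm_mul_rpow_measure_univ hp.le ((hf i).restrict (s := s))
    _ ≤ C * ENNReal.ofReal δ ^ r := by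
        rw [Measure.restrict_apply_univ]
        gcongr
        exact (eLpNorm_mono_measure _ Measure.restrict_le_self).trans (hfC i)
    _ ≤ ENNReal.ofReal ε := hδε.le

theorem tendsto_integral_of_ae_tendsto_of_eLpNorm_le [NormedSpace ℝ β] [IsFiniteMeasure μ]
    {p : ℝ≥0∞} (hp : 1 < p) {f : ℕ → α → β} {g : α → β}
    (hf : ∀ n, AEStronglyMeasurable (f n) μ) {C : ℝ≥0∞} (hC : C ≠ ∞)
    (hfC : ∀ n, eLpNorm (f n) p μ ≤ C) (hg : Integrable g μ)
    (hfg : ∀ᵐ x ∂μ, Tendsto (fun n => f n x) atTop (𝓝 (g x))) :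
    Tendsto (fun n => ∫ x, f n x ∂μ) atTop (𝓝 (∫ x, g x ∂μ)) := by
  have hf_int : ∀ n, Integrable (f n) μ := fun n =>
    memLp_one_iff_integrable.1 <|
      MemLp.mono_exponent ⟨hf n, (hfC n).trans_lt hC.lt_top⟩ hp.le
  refine tendsto_integral_of_L1' g hg.1 (Eventually.of_forall hf_int) ?_
  exact tendsto_Lp_finite_of_tendsto_ae le_rfl ENNReal.one_ne_top hf
    (memLp_one_iff_integrable.2 hg) (unifIntegrable_one_of_eLpNorm_le hp hf hC hfC) hfg

end Vitali

theorem ContinuousLinearMap.isClosed_setOf_tendsto_apply {𝕜 V W ι : Type*}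
    [NontriviallyNormedField 𝕜] [SeminormedAddCommGroup V] [NormedSpace 𝕜 V]
    [NormedAddCommGroup W] [NormedSpace 𝕜 W] {l : Filter ι} {Λ : ι → V →L[𝕜] W}
    (hΛ : ∃ C, ∀ i, ‖Λ i‖ ≤ C) (Λ₀ : V →L[𝕜] W) :
    IsClosed {v | Tendsto (fun i => Λ i v) l (𝓝 (Λ₀ v))} :=
  Equicontinuous.isClosed_setOfPred_tendsto
    ((NormedSpace.equicontinuous_TFAE Λ).out 5 1 |>.1 hΛ) Λ₀.continuous

section Lp

variable {α E : Type*} [MeasurableSpace α] {μ : Measure α} [NormedAddCommGroup E]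
  {p : ℝ≥0∞} [Fact (1 ≤ p)]

theorem lipschitzWith_indicatorConstLp {s : Set α} (hs : MeasurableSet s) (hμs : μ s ≠ ∞) :
    LipschitzWith (Real.toNNReal (μ.real s ^ (1 / p.toReal)))
      (indicatorConstLp p hs hμs : E → Lp E p μ) :=
  LipschitzWith.of_dist_le_mul fun c d => by
    rw [dist_eq_norm, indicatorConstLp_sub, dist_eq_norm, Real.coe_toNNReal _ (by positivity),
      mul_comm]
    exact norm_indicatorConstLp_le

variable {𝕜 W : Type*} [NontriviallyNormedField 𝕜] [NormedSpace 𝕜 E]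
  [NormedAddCommGroup W] [NormedSpace 𝕜 W]

theorem ContinuousLinearMap.tendsto_apply_of_tendsto_apply_indicatorConstLp {ι : Type*}
    {l : Filter ι} (hp : p ≠ ∞) {Λ : ι → Lp E p μ →L[𝕜] W} (hΛ : ∃ C, ∀ i, ‖Λ i‖ ≤ C)
    (Λ₀ : Lp E p μ →L[𝕜] W) {D : Set E} (hD : Dense D)
    (h : ∀ ⦃s : Set α⦄ (hs : MeasurableSet s) (hμs : μ s ≠ ∞), ∀ c ∈ D,
      Tendsto (fun i => Λ i (indicatorConstLp p hs hμs c)) l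
        (𝓝 (Λ₀ (indicatorConstLp p hs hμs c))))
    (f : Lp E p μ) : Tendsto (fun i => Λ i f) l (𝓝 (Λ₀ f)) := by
  have hclosed := ContinuousLinearMap.isClosed_setOf_tendsto_apply (l := l) hΛ Λ₀
  induction f using Lp.induction hp with
  | indicatorConst c hs hμs =>
    rw [Lp.simpleFunc.coe_indicatorConst]
    exact hD.induction (h hs hμs.ne)
      (hclosed.preimage (lipschitzWith_indicatorConstLp hs hμs.ne).continuous) c
  | add _ _ _ hf hg =>
    simpa only [map_add] using hf.add hg
  | isClosed => exact hclosed

end Lp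

theorem ContinuousLinearMap.lpPairing_toLp_toLp {α E F G 𝕜 : Type*} [MeasurableSpace α]
    {μ : Measure α}    [NontriviallyNormedField 𝕜] [NormedAddCommGroup E] [NormedAddCommGroup F]
    [NormedAddCommGroup G] [NormedSpace 𝕜 E] [NormedSpace 𝕜 F] [NormedSpace 𝕜 G]
    [NormedSpace ℝ G] [SMulCommClass ℝ 𝕜 G] [CompleteSpace G]
    {p q : ℝ≥0∞} [p.HolderConjugate q] [Fact (1 ≤ p)] [Fact (1 ≤ q)]
    (B : E →L[𝕜] F →L[𝕜] G) {f : α → E} {g : α → F} (hf : MemLp f p μ) (hg : MemLp g q μ) :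
    B.lpPairing μ p q (hf.toLp f) (hg.toLp g) = ∫ x, B (f x) (g x) ∂μ := by
  rw [lpPairing_eq_integral]
  refine integral_congr_ae ?_
  filter_upwards [hf.coeFn_toLp, hg.coeFn_toLp] with x hfx hgx
  rw [hfx, hgx]

theorem tendsto_integral_apply_indicator_const {α X F : Type*} [MeasurableSpace α]
    {μ : Measure α} [IsFiniteMeasure μ] [NormedAddCommGroup X] [NormedSpace ℝ X]
    [NormedAddCommGroup F] [NormedSpace ℝ F]
    {p : ℝ≥0∞} (hp : 1 < p) {u : α → X →L[ℝ] F} {un : ℕ → α → X →L[ℝ] F}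
    (hu : MemLp u p μ) (hun : ∀ n, AEStronglyMeasurable (un n) μ) {C : ℝ≥0∞} (hC : C ≠ ∞)
    (hunC : ∀ n, eLpNorm (un n) p μ ≤ C) {y : X}
    (hy : ∀ᵐ e ∂μ, Tendsto (fun n => un n e y) atTop (𝓝 (u e y)))
    {s : Set α} (hs : MeasurableSet s) :
    Tendsto (fun n => ∫ e, un n e (s.indicator (fun _ => y) e) ∂μ) atTop
      (𝓝 (∫ e, u e (s.indicator (fun _ => y) e) ∂μ)) := by
  set z : α → X := s.indicator fun _ => y
  have hz : AEStronglyMeasurable z μ := aestronglyMeasurable_const.indicator hs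
  have hbound (w : X →L[ℝ] F) (e : α) : ‖w (z e)‖ ≤ ‖y‖ * ‖w‖ :=
    (w.le_opNorm _).trans <| by
      rw [mul_comm]; gcongr; exact norm_indicator_le_norm_self _ _
  have hmeas {w : α → X →L[ℝ] F} (hw : AEStronglyMeasurable w μ) :
      AEStronglyMeasurable (fun e => w e (z e)) μ :=
    (ContinuousLinearMap.id ℝ (X →L[ℝ] F)).aestronglyMeasurable_comp₂ hw hz
  refine tendsto_integral_of_ae_tendsto_of_eLpNorm_le hp (fun n => hmeas (hun n))
    (C := ENNReal.ofReal ‖y‖ * C) (by finiteness)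
    (fun n => (eLpNorm_le_mul_eLpNorm_of_ae_le_mul
      (Eventually.of_forall fun e => hbound (un n e) e) p).trans (by gcongr; exact hunC n))
    (((hu.integrable hp.le).norm.const_mul ‖y‖).mono' (hmeas hu.1)
      (Eventually.of_forall fun e => hbound (u e) e)) ?_
  filter_upwards [hy] with e he
  by_cases hes : e ∈ s <;> simp [z, hes, he]

theorem weakStar_convergence_of_ae_pointwise_general
    {X : Type*} [NormedAddCommGroup X] [NormedSpace ℝ X]
    (D : Set X) (hD : Dense D)
    {E : Type*} [MeasurableSpace E] (μ : Measure E) [IsFiniteMeasure μ]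
    (p q : ℝ) (hp : 1 < p) (hpq : 1 / p + 1 / q = 1)
    (u : E → X →L[ℝ] ℝ) (un : ℕ → E → X →L[ℝ] ℝ)
    (hu : MemLp u (ENNReal.ofReal p) μ)
    (hun : ∀ n, MemLp (un n) (ENNReal.ofReal p) μ)
    (hbdd : ∃ C : ℝ≥0∞, C < ⊤ ∧ ∀ n, eLpNorm (un n) (ENNReal.ofReal p) μ ≤ C)
    (hconv : ∀ y ∈ D, ∀ᵐ e ∂μ, Tendsto (fun n => un n e y) atTop (nhds (u e y))) :
    ∀ v : E → X, MemLp v (ENNReal.ofReal q) μ →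
      Tendsto (fun n => ∫ e, un n e (v e) ∂μ) atTop (nhds (∫ e, u e (v e) ∂μ)) := by
  intro v hv
  obtain ⟨C, hC, hunC⟩ := hbdd
  have hpq' : p.HolderConjugate q :=
    Real.holderConjugate_iff.2 ⟨hp, by simpa only [one_div] using hpq⟩
  have hP : 1 < ENNReal.ofReal p := ENNReal.one_lt_ofReal.2 hp
  have := hpq'.ennrealOfReal
  have : Fact (1 ≤ ENNReal.ofReal p) := ⟨hP.le⟩
  have : Fact (1 ≤ ENNReal.ofReal q) := ⟨(ENNReal.one_lt_ofReal.2 hpq'.symm.lt).le⟩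
  set L := (ContinuousLinearMap.id ℝ (X →L[ℝ] ℝ)).lpPairing μ (ENNReal.ofReal p)
    (ENNReal.ofReal q)
  have hΛ_bdd : ∃ K, ∀ n, ‖L ((hun n).toLp (un n))‖ ≤ K :=
    ⟨‖L‖ * C.toReal, fun n => (L.le_opNorm _).trans <| by
      gcongr
      rw [Lp.norm_toLp]
      exact ENNReal.toReal_mono hC.ne (hunC n)⟩
  have hind : ∀ ⦃s : Set E⦄ (hs : MeasurableSet s) (hμs : μ s ≠ ∞), ∀ y ∈ D,
      Tendsto (fun n => L ((hun n).toLp (un n)) (indicatorConstLp _ hs hμs y)) atTop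
        (𝓝 (L (hu.toLp u) (indicatorConstLp _ hs hμs y))) := fun s hs _ y hy => by
    simpa only [L, indicatorConstLp, ContinuousLinearMap.lpPairing_toLp_toLp,
      ContinuousLinearMap.id_apply] using
      tendsto_integral_apply_indicator_const hP hu (fun n => (hun n).1) hC.ne hunC (hconv y hy) hs
  simpa only [L, ContinuousLinearMap.lpPairing_toLp_toLp, ContinuousLinearMap.id_apply] using
    ContinuousLinearMap.tendsto_apply_of_tendsto_apply_indicatorConstLp ENNReal.ofReal_ne_top
      hΛ_bdd (L (hu.toLp u)) hD hind (hv.toLp v)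

/-- Lemma 4.2 [GZ]: if `X` is a separable Banach space, `D ⊆ X` is dense, `(E, μ)` is a
finite measure space, `p ∈ (1,∞)` with conjugate exponent `q`, and `u_n, u ∈ Lᵖ(E; X*)`
with `(u_n)` uniformly bounded in `Lᵖ(E; X*)` and `⟨u_n, y⟩ → ⟨u, y⟩` μ-a.e. for each
`y ∈ D`, then `u_n ⇀* u` in `Lᵖ(E; X*)`: for every `v ∈ L^q(E; X)`,
`∫ ⟨u_n, v⟩ dμ → ∫ ⟨u, v⟩ dμ`. -/
theorem weakStar_convergence_of_ae_pointwise
    {X : Type*} [NormedAddCommGroup X] [NormedSpace ℝ X] [CompleteSpace X]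
    [TopologicalSpace.SeparableSpace X]
    (D : Set X) (hD : Dense D)
    {E : Type*} [MeasurableSpace E] (μ : Measure E) [IsFiniteMeasure μ]
    (p q : ℝ) (hp : 1 < p) (hpq : 1 / p + 1 / q = 1)
    (u : E → X →L[ℝ] ℝ) (un : ℕ → E → X →L[ℝ] ℝ)
    (hu : MemLp u (ENNReal.ofReal p) μ)
    (hun : ∀ n, MemLp (un n) (ENNReal.ofReal p) μ)
    (hbdd : ∃ C : ℝ≥0∞, C < ⊤ ∧ ∀ n, eLpNorm (un n) (ENNReal.ofReal p) μ ≤ C)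
    (hconv : ∀ y ∈ D, ∀ᵐ e ∂μ, Tendsto (fun n => un n e y) atTop (nhds (u e y))) :
    ∀ v : E → X, MemLp v (ENNReal.ofReal q) μ →
      Tendsto (fun n => ∫ e, un n e (v e) ∂μ) atTop (nhds (∫ e, u e (v e) ∂μ)) :=
  weakStar_convergence_of_ae_pointwise_general D hD μ p q hp hpq u un hu hun hbdd hconv
end
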